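/- arXiv:1707.04654 — 6 statements merged into one kernel-verified Lean document; each statement's English description precedes it below -/
import Mathlib

section
/- Let f = ∑_{n≥0} a(n)·Xⁿ be a formal power series with rational coefficients satisfying the algebraic equation X²·f² + (X−1)·f + 1 = 0. Then a(0) = 1, a(1) = 1, and for every integer n ≥ 2, (n+2)·a(n) = (2n+1)·a(n−1) + 3·(n−1)·a(n−2). (This is the generating-function equation of the Motzkin numbers, OEIS A001006.) -/
/-!
Differentiating `X²f² + (X − 1)f + 1 = 0` and eliminating `f²` and `f·f'` between the equation
and its derivative gives the linear differential equation
`(1 − 2X − 3X²)·Xf' = (3X² + 3X − 2)·f + 2`. Since `Xf'` has coefficients `n·a(n)`, reading off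
the coefficient of `X^(n+2)` yields the recurrence.
-/

open PowerSeries

namespace PowerSeries

variable {R : Type*}

theorem coeff_X_mul_derivative [CommSemiring R] (f : R⟦X⟧) (n : ℕ) :
    coeff n (X * d⁄dX R f) = n * coeff n f := by
  cases n with
  | zero => simp
  | succ n => rw [coeff_succ_X_mul, coeff_derivative, mul_comm, Nat.cast_succ]

theorem coeff_add_two_quadratic_mul [CommSemiring R] (a b c : R) (g : R⟦X⟧) (n : ℕ) :
    coeff (n + 2) ((C a + C b * X + C c * X ^ 2) * g) =
      a * coeff (n + 2) g + b * coeff (n + 1) g + c * coeff n g := by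
  simp only [add_mul, mul_assoc, map_add, coeff_C_mul, coeff_succ_X_mul, coeff_X_pow_mul]

end PowerSeries

section Motzkin

variable {R : Type*} [CommRing R] {f : R⟦X⟧}

theorem motzkin_coeff_zero (hf : X ^ 2 * f ^ 2 + (X - 1) * f + 1 = 0) : coeff 0 f = 1 := by
  have h := congrArg constantCoeff hf
  simp only [map_add, map_mul, map_pow, map_sub, map_one, constantCoeff_X, map_zero] at h
  rw [coeff_zero_eq_constantCoeff_apply]
  linear_combination -h

theorem motzkin_coeff_one (hf : X ^ 2 * f ^ 2 + (X - 1) * f + 1 = 0) : coeff 1 f = 1 := by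
  have h := congrArg (coeff 1) hf
  simp only [map_add, sub_mul, map_sub, one_mul, coeff_X_pow_mul', coeff_succ_X_mul, coeff_one,
    Nat.not_ofNat_le_one, if_false, one_ne_zero, map_zero, zero_add, add_zero] at h
  linear_combination motzkin_coeff_zero hf - h

theorem motzkin_euler_ode (hf : X ^ 2 * f ^ 2 + (X - 1) * f + 1 = 0) :
    (1 - 2 * X - 3 * X ^ 2) * (X * d⁄dX R f) = (-2 + 3 * X + 3 * X ^ 2) * f + 2 := by
  have hd : 2 * X * f ^ 2 + 2 * X ^ 2 * f * d⁄dX R f + f + (X - 1) * d⁄dX R f = 0 := by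
    have h := congrArg (d⁄dX R) hf
    simp only [map_add, Derivation.leibniz, Derivation.leibniz_pow, derivative_X, map_sub,
      Derivation.map_one_eq_zero, smul_eq_mul, map_zero] at h
    linear_combination h
  linear_combination (X * (2 * X ^ 2 * f + X - 1)) * hd
    - (4 * X ^ 3 * d⁄dX R f + 4 * X ^ 2 * f + 2) * hf

theorem motzkin_coeff_add_two (hf : X ^ 2 * f ^ 2 + (X - 1) * f + 1 = 0) (n : ℕ) :
    (n + 4) * coeff (n + 2) f = (2 * n + 5) * coeff (n + 1) f + 3 * (n + 1) * coeff n f := by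
  have h := congrArg (coeff (n + 2)) (motzkin_euler_ode hf)
  have hl : (1 - 2 * X - 3 * X ^ 2 : R⟦X⟧) = C 1 + C (-2) * X + C (-3) * X ^ 2 := by
    simp only [map_one, map_neg, map_ofNat]; ring
  have hr : (-2 + 3 * X + 3 * X ^ 2 : R⟦X⟧) = C (-2) + C 3 * X + C 3 * X ^ 2 := by
    simp only [map_neg, map_ofNat]
  rw [hl, hr, map_add, coeff_add_two_quadratic_mul, coeff_add_two_quadratic_mul] at h
  simp only [coeff_X_mul_derivative, ← map_ofNat C 2, coeff_C] at h
  push_cast at h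
  linear_combination h

end Motzkin

/-- The coefficient sequence of the power series solution of
X²·f² + (X−1)·f + 1 = 0 (the Motzkin numbers, OEIS A001006) satisfies
a(0) = 1, a(1) = 1 and (n+2)·a(n) = (2n+1)·a(n−1) + 3·(n−1)·a(n−2) for n ≥ 2. -/
theorem motzkin_recurrence (f : PowerSeries ℚ)
    (hf : PowerSeries.X ^ 2 * f ^ 2 + (PowerSeries.X - 1) * f + 1 = 0) :
    PowerSeries.coeff 0 f = 1 ∧ PowerSeries.coeff 1 f = 1 ∧
      ∀ n : ℕ, 2 ≤ n →
        ((n : ℚ) + 2) * PowerSeries.coeff n f =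
          (2 * (n : ℚ) + 1) * PowerSeries.coeff (n - 1) f +
            3 * ((n : ℚ) - 1) * PowerSeries.coeff (n - 2) f := by
  refine ⟨motzkin_coeff_zero hf, motzkin_coeff_one hf, fun n hn => ?_⟩
  obtain ⟨m, rfl⟩ := Nat.exists_eq_add_of_le' hn
  rw [Nat.add_sub_cancel, show m + 2 - 1 = m + 1 by omega]
  push_cast
  linear_combination motzkin_coeff_add_two hf m
end

section
/- Let f = ∑_{n≥0} a(n)·Xⁿ be a formal power series with rational coefficients satisfying X²·f² − (1 − X + X²)·f + 1 = 0. Then a(0) = 1, a(1) = 1, a(2) = 1, a(3) = 2, and for every integer n ≥ 4, (n+2)·a(n) = (2n+1)·a(n−1) + (n−1)·a(n−2) + (2n−5)·a(n−3) − (n−4)·a(n−4). (f is the generating function (1 − x + x² − √(1−2x−x²−2x³+x⁴))/(2x²) of OEIS A004148, conjectured by Somos, with recurrence conjectured by Mathar.) -/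
/-!
Writing `b = 1 - X + X²`, the series `f` is a root of `P(Y) = X²Y² - bY + 1`, whose discriminant is
`Δ = b² - 4X² = 1 - 2X - X² - 2X³ + X⁴`. Differentiating `P(f) = 0` gives `P'(f)·f' = (2X - 1)f - 2Xf²`;
multiplying by `P'(f) = 2X²f - b`, which is a unit, and reducing with `P(f) = 0` turns this into the
linear differential equation `Δ·Xf' + (2 - 3X - X² - X³)f = 2(1 - X²)`. Comparing coefficients of `Xⁿ`
for `n ≥ 4` is the recurrence; the initial values come from `f = 1 + Xf - X²f + X²f²`.
-/

open PowerSeries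

variable {R : Type*} [CommRing R]

def IsA004148Series (f : R⟦X⟧) : Prop :=
  X ^ 2 * f ^ 2 - (1 - X + X ^ 2) * f + 1 = 0

theorem PowerSeries.coeff_ofNat_mul (k : ℕ) [k.AtLeastTwo] (n : ℕ) (g : R⟦X⟧) :
    coeff n (ofNat(k) * g) = ofNat(k) * coeff n g := by
  rw [← map_ofNat C k, coeff_C_mul]

theorem PowerSeries.coeff_X_mul_derivative_s2 (f : R⟦X⟧) (n : ℕ) :
    coeff n (X * d⁄dX R f) = n * coeff n f := by
  cases n with
  | zero => simp
  | succ n => rw [coeff_succ_X_mul, coeff_derivative]; push_cast; ring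

theorem isUnit_two_mul_X_sq_mul_sub (f : R⟦X⟧) :
    IsUnit (2 * X ^ 2 * f - (1 - X + X ^ 2) : R⟦X⟧) := by
  rw [isUnit_iff_constantCoeff]; simp

namespace IsA004148Series

variable {f : R⟦X⟧}

theorem eq_one_add (hf : IsA004148Series f) : f = 1 + X * f - X ^ 2 * f + X ^ 2 * f ^ 2 := by
  unfold IsA004148Series at hf
  linear_combination -hf

theorem constantCoeff_eq_one (hf : IsA004148Series f) : constantCoeff f = 1 := by
  rw [hf.eq_one_add]; simp

theorem coeff_zero (hf : IsA004148Series f) : coeff 0 f = 1 := by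
  simpa using hf.constantCoeff_eq_one

theorem coeff_one (hf : IsA004148Series f) : coeff 1 f = 1 := by
  simpa [coeff_X_pow_mul', hf.constantCoeff_eq_one] using congrArg (coeff 1) hf.eq_one_add

theorem coeff_add_two (hf : IsA004148Series f) (n : ℕ) :
    coeff (n + 2) f = coeff (n + 1) f - coeff n f + coeff n (f ^ 2) := by
  conv_lhs => rw [hf.eq_one_add]
  simp [coeff_X_pow_mul', coeff_succ_X_mul]

theorem coeff_two (hf : IsA004148Series f) : coeff 2 f = 1 := by
  rw [hf.coeff_add_two 0]; simp [hf.constantCoeff_eq_one, hf.coeff_one]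

theorem coeff_three (hf : IsA004148Series f) : coeff 3 f = 2 := by
  rw [hf.coeff_add_two 1]
  norm_num [pow_two, coeff_mul, Finset.Nat.antidiagonal_succ, hf.constantCoeff_eq_one, hf.coeff_one,
    hf.coeff_two]

theorem derivative_relation (hf : IsA004148Series f) :
    (2 * X ^ 2 * f - (1 - X + X ^ 2)) * d⁄dX R f = (2 * X - 1) * f - 2 * X * f ^ 2 := by
  have h := congrArg (d⁄dX R) hf
  simp only [map_add, map_sub, Derivation.leibniz, Derivation.leibniz_pow,
    Derivation.map_one_eq_zero, derivative_X, smul_eq_mul, map_zero] at h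
  linear_combination h

theorem linear_ode (hf : IsA004148Series f) :
    (1 - 2 * X - X ^ 2 - 2 * X ^ 3 + X ^ 4) * (X * d⁄dX R f) + (2 - 3 * X - X ^ 2 - X ^ 3) * f =
      2 * (1 - X ^ 2) := by
  refine (isUnit_two_mul_X_sq_mul_sub f).mul_left_cancel ?_
  have hder := hf.derivative_relation
  unfold IsA004148Series at hf
  linear_combination (X * (1 - 2 * X - X ^ 2 - 2 * X ^ 3 + X ^ 4)) * hder
    + (2 - 2 * X + 2 * X ^ 3 - 2 * X ^ 4) * hf

theorem coeff_recurrence (hf : IsA004148Series f) (m : ℕ) :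
    ((m : R) + 6) * coeff (m + 4) f =
      (2 * m + 9) * coeff (m + 3) f + (m + 3) * coeff (m + 2) f + (2 * m + 3) * coeff (m + 1) f -
        m * coeff m f := by
  have h := congrArg (coeff (m + 4)) hf.linear_ode
  have hg (n : ℕ) := coeff_X_mul_derivative_s2 f n
  generalize X * d⁄dX R f = g at h hg
  simp only [add_mul, sub_mul, one_mul, mul_assoc, map_add, map_sub, hg, Nat.cast_add,
    Nat.cast_ofNat, coeff_ofNat_mul, coeff_succ_X_mul, coeff_X_pow_mul', le_add_iff_nonneg_left,
    zero_le, ↓reduceIte, Nat.reduceSubDiff, Nat.cast_one, add_tsub_cancel_right,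
    PowerSeries.coeff_one, Nat.add_eq_zero_iff, OfNat.ofNat_ne_zero, and_false, coeff_X_pow,
    Nat.reduceEqDiff, sub_self, mul_zero] at h
  linear_combination h

end IsA004148Series

/-- The coefficient sequence of the power series solution of
X²·f² − (1 − X + X²)·f + 1 = 0 (OEIS A004148) satisfies
a(0)=1, a(1)=1, a(2)=1, a(3)=2 and, for n ≥ 4,
(n+2)·a(n) = (2n+1)·a(n−1) + (n−1)·a(n−2) + (2n−5)·a(n−3) − (n−4)·a(n−4). -/
theorem A004148_recurrence (f : PowerSeries ℚ)
    (hf : PowerSeries.X ^ 2 * f ^ 2 -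
        (1 - PowerSeries.X + PowerSeries.X ^ 2) * f + 1 = 0) :
    PowerSeries.coeff 0 f = 1 ∧ PowerSeries.coeff 1 f = 1 ∧
      PowerSeries.coeff 2 f = 1 ∧ PowerSeries.coeff 3 f = 2 ∧
      ∀ n : ℕ, 4 ≤ n →
        ((n : ℚ) + 2) * PowerSeries.coeff n f =
          (2 * (n : ℚ) + 1) * PowerSeries.coeff (n - 1) f +
            ((n : ℚ) - 1) * PowerSeries.coeff (n - 2) f +
            (2 * (n : ℚ) - 5) * PowerSeries.coeff (n - 3) f -
            ((n : ℚ) - 4) * PowerSeries.coeff (n - 4) f := by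
  have hA : IsA004148Series f := hf
  refine ⟨hA.coeff_zero, hA.coeff_one, hA.coeff_two, hA.coeff_three, fun n hn => ?_⟩
  obtain ⟨m, rfl⟩ := Nat.exists_eq_add_of_le' hn
  simp only [Nat.reduceSubDiff]
  push_cast
  linear_combination hA.coeff_recurrence m
end

section
/- Let f = ∑_{n≥0} a(n)·Xⁿ be a formal power series with rational coefficients satisfying (2 + X)·f² − (1 + 2X)·f + X = 0 and with a(0) = 0. Then a(1) = 1, a(2) = 0, and for every integer n ≥ 3, 2n·a(n) = (7n−12)·a(n−1) + 2·(2n−3)·a(n−2). (f is the generating function (1 − √(1−4x))/(3 − √(1−4x)) of the Fine numbers, OEIS A000957.) -/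
/-!
Differentiating the quadratic equation and eliminating `f ^ 2` with the help of the
discriminant `(1 + 2X)² - 4X(2 + X) = 1 - 4X` turns it into the first-order linear equation
`(2 + X)(1 - 4X) f' + (5 - 2X) f = 2 - 2X`, and comparing the coefficients of `X ^ (n - 1)`
there gives the recurrence. The first two coefficients are read off the quadratic equation.
-/

open PowerSeries

namespace PowerSeries

section FineEquation

variable {R : Type*} [CommRing R] {f : R⟦X⟧}
  (hf : (2 + X) * f ^ 2 - (1 + 2 * X) * f + X = 0)
include hf

theorem coeff_one_of_fine_eq (h0 : coeff 0 f = 0) : coeff 1 f = 1 := by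
  have e : 1 - coeff 1 f = 0 := by
    simpa [coeff_mul, pow_two, Finset.Nat.sum_antidiagonal_eq_sum_range_succ_mk,
      Finset.sum_range_succ, h0, coeff_X, ← map_ofNat C, neg_add_eq_sub]
      using congrArg (coeff 1) hf
  linear_combination -e

theorem coeff_two_of_fine_eq (h0 : coeff 0 f = 0) : coeff 2 f = 0 := by
  have e : 2 * (coeff 1 f * coeff 1 f) - (coeff 2 f + 2 * coeff 1 f) = 0 := by
    simpa [coeff_mul, pow_two, Finset.Nat.sum_antidiagonal_eq_sum_range_succ_mk,
      Finset.sum_range_succ, h0, coeff_X, ← map_ofNat C]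
      using congrArg (coeff 2) hf
  linear_combination -e + 2 * coeff 1 f * coeff_one_of_fine_eq hf h0

theorem derivative_fine_eq :
    f ^ 2 + 2 * (2 + X) * f * d⁄dX R f - 2 * f - (1 + 2 * X) * d⁄dX R f + 1 = 0 := by
  have h := congrArg (d⁄dX R) hf
  have derivative_two : d⁄dX R (2 : R⟦X⟧) = 0 := by rw [← map_ofNat C 2, derivative_C]
  simp only [map_sub, map_add, Derivation.leibniz, Derivation.leibniz_pow, derivative_X,
    smul_eq_mul, map_zero, derivative_two, Derivation.map_one_eq_zero] at h
  linear_combination h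

theorem linear_ode_of_fine_eq :
    (2 + X) * (1 - 4 * X) * d⁄dX R f + (5 - 2 * X) * f = 2 - 2 * X := by
  linear_combination (7 + 2 * X - 2 * (2 + X) * f - 4 * (2 + X) ^ 2 * d⁄dX R f) * hf
    + (2 + X) * (2 * (2 + X) * f - (1 + 2 * X)) * derivative_fine_eq hf

end FineEquation

theorem coeff_recurrence_of_linear_ode {R : Type*} [CommRing R] {f : R⟦X⟧}
    (h : (2 + X) * (1 - 4 * X) * d⁄dX R f + (5 - 2 * X) * f = 2 - 2 * X) (n : ℕ) :
    2 * (n + 3 : R) * coeff (n + 3) f =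
      (7 * (n + 3 : R) - 12) * coeff (n + 2) f + 2 * (2 * (n + 3 : R) - 3) * coeff (n + 1) f := by
  have expand : (2 + X) * (1 - 4 * X) * d⁄dX R f + (5 - 2 * X) * f =
      C 2 * d⁄dX R f - C 7 * (X * d⁄dX R f) - C 4 * (X ^ 2 * d⁄dX R f)
        + C 5 * f - C 2 * (X * f) := by
    simp only [map_ofNat]
    ring
  have e := congrArg (coeff (n + 2)) h
  rw [expand] at e
  simp only [map_sub, map_add, coeff_C_mul, coeff_succ_X_mul, coeff_X_pow_mul', coeff_derivative,
    ← map_ofNat C, coeff_succ_C, coeff_succ_mul_X, if_pos (Nat.le_add_left 2 n),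
    add_tsub_cancel_right, sub_self] at e
  push_cast at e
  linear_combination e

end PowerSeries

/-- The coefficient sequence of the power series solution of
(2 + X)·f² − (1 + 2X)·f + X = 0 with a(0) = 0 (the Fine numbers, OEIS A000957)
satisfies a(1) = 1, a(2) = 0, and 2n·a(n) = (7n−12)·a(n−1) + 2·(2n−3)·a(n−2)
for all n ≥ 3. -/
theorem fine_recurrence (f : PowerSeries ℚ)
    (hf : (2 + PowerSeries.X) * f ^ 2 - (1 + 2 * PowerSeries.X) * f +
        PowerSeries.X = 0)
    (h0 : PowerSeries.coeff 0 f = 0) :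
    PowerSeries.coeff 1 f = 1 ∧ PowerSeries.coeff 2 f = 0 ∧
      ∀ n : ℕ, 3 ≤ n →
        2 * (n : ℚ) * PowerSeries.coeff n f =
          (7 * (n : ℚ) - 12) * PowerSeries.coeff (n - 1) f +
            2 * (2 * (n : ℚ) - 3) * PowerSeries.coeff (n - 2) f := by
  refine ⟨coeff_one_of_fine_eq hf h0, coeff_two_of_fine_eq hf h0, fun n hn => ?_⟩
  obtain ⟨m, rfl⟩ : ∃ m, n = m + 3 := ⟨n - 3, by omega⟩
  push_cast
  exact coeff_recurrence_of_linear_ode (linear_ode_of_fine_eq hf) m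
end

section
/- Let f = ∑_{n≥0} a(n)·Xⁿ be a formal power series with rational coefficients satisfying 2X·f² − (1 + X)·f + 1 = 0. Then a(0) = 1, a(1) = 1, and for every integer n ≥ 2, (n+1)·a(n) = 3·(2n−1)·a(n−1) − (n−2)·a(n−2). (f is the generating function (1 + x − √(1−6x+x²))/(4x) of the little Schröder / super-Catalan numbers, OEIS A001003.) -/
/-!
With `g = 4Xf − 1 − X` the quadratic becomes `g² = 1 − 6X + X²`. Differentiating and multiplying
by `g` eliminates the square root: `(1 − 6X + X²) g' = (X − 3) g`, a first-order linear ODE whose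
coefficientwise reading is the stated three-term recurrence for the coefficients of `g`; these
are `4 a(n − 1)` from index `2` on.
-/

open PowerSeries

section Derivative

variable {R : Type*} [CommRing R]

theorem two_mul_mul_derivative_eq_of_sq_eq {g p : R⟦X⟧} (hg : g ^ 2 = p) :
    2 * p * d⁄dX R g = d⁄dX R p * g := by
  have hD : 2 * g * d⁄dX R g = d⁄dX R p := by
    rw [← hg, Derivation.leibniz_pow, nsmul_eq_mul]; push_cast; ring
  rw [← hD, ← hg]; ring

theorem derivative_one_sub_six_mul_X_add_X_sq :
    d⁄dX R (1 - 6 * X + X ^ 2) = 2 * (X - 3) := by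
  rw [← map_ofNat C 6]
  simp only [map_add, map_sub, Derivation.map_one_eq_zero, Derivation.leibniz_pow,
    Derivation.leibniz, derivative_C, derivative_X, smul_eq_mul]
  rw [map_ofNat]; ring

theorem mul_derivative_eq_of_sq_eq_one_sub_six_mul_X_add_X_sq [IsDomain R] [NeZero (2 : R)]
    {g : R⟦X⟧} (hg : g ^ 2 = 1 - 6 * X + X ^ 2) :
    (1 - 6 * X + X ^ 2) * d⁄dX R g = (X - 3) * g := by
  have h2 : (2 : R⟦X⟧) ≠ 0 := by
    rw [← map_ofNat C 2, Ne, map_eq_zero_iff C C_injective]; exact two_ne_zero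
  apply mul_left_cancel₀ h2
  linear_combination two_mul_mul_derivative_eq_of_sq_eq hg +
    g * (derivative_one_sub_six_mul_X_add_X_sq (R := R))

theorem coeff_add_two_of_mul_derivative_eq {g : R⟦X⟧}
    (hg : (1 - 6 * X + X ^ 2) * d⁄dX R g = (X - 3) * g) (n : ℕ) :
    ((n : R) + 2) * coeff (n + 2) g =
      3 * (2 * n + 1) * coeff (n + 1) g - ((n : R) - 1) * coeff n g := by
  have h := congrArg (coeff (n + 1)) hg
  rw [← map_ofNat C 6, ← map_ofNat C 3] at h
  simp only [sub_mul, add_mul, one_mul, map_sub, map_add, mul_assoc, coeff_succ_X_mul,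
    pow_two, coeff_derivative, coeff_C_mul] at h
  cases n with
  | zero =>
    simp only [coeff_zero_X_mul, Nat.cast_zero] at h ⊢
    linear_combination h
  | succ n =>
    simp only [coeff_succ_X_mul, coeff_derivative] at h
    push_cast at h ⊢
    linear_combination h

end Derivative

/-- The coefficient sequence of the power series solution of
2X·f² − (1 + X)·f + 1 = 0 (the little Schröder numbers, OEIS A001003) satisfies
a(0) = 1, a(1) = 1, and (n+1)·a(n) = 3·(2n−1)·a(n−1) − (n−2)·a(n−2) for n ≥ 2. -/
theorem little_schroeder_recurrence (f : PowerSeries ℚ)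
    (hf : 2 * PowerSeries.X * f ^ 2 - (1 + PowerSeries.X) * f + 1 = 0) :
    PowerSeries.coeff 0 f = 1 ∧ PowerSeries.coeff 1 f = 1 ∧
      ∀ n : ℕ, 2 ≤ n →
        ((n : ℚ) + 1) * PowerSeries.coeff n f =
          3 * (2 * (n : ℚ) - 1) * PowerSeries.coeff (n - 1) f -
            ((n : ℚ) - 2) * PowerSeries.coeff (n - 2) f := by
  have h0 : -constantCoeff f + 1 = 0 := by simpa using congrArg constantCoeff hf
  have h1 := congrArg (coeff 1) hf
  rw [← map_ofNat C 2] at h1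
  simp only [mul_assoc, coeff_succ_X_mul, add_mul, one_mul, map_add, map_sub, coeff_C_mul,
    coeff_one, one_ne_zero, if_false, add_zero, coeff_zero_eq_constantCoeff_apply, map_pow,
    map_zero] at h1
  refine ⟨by rw [coeff_zero_eq_constantCoeff_apply]; linear_combination -h0,
    by linear_combination -h1 - (2 * constantCoeff f + 1) * h0, fun n hn => ?_⟩
  set g : ℚ⟦X⟧ := 4 * X * f - 1 - X with hg
  have hg2 : g ^ 2 = 1 - 6 * X + X ^ 2 := by linear_combination 8 * X * hf
  have hcoeff : ∀ k, coeff (k + 2) g = 4 * coeff (k + 1) f := fun k => by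
    rw [hg, ← map_ofNat C 4]
    simp [mul_assoc, coeff_succ_X_mul, coeff_C_mul, coeff_one, coeff_X]
  obtain ⟨m, rfl⟩ := Nat.exists_eq_add_of_le' hn
  have hrec := coeff_add_two_of_mul_derivative_eq
    (mul_derivative_eq_of_sq_eq_one_sub_six_mul_X_add_X_sq hg2) (m + 1)
  have hlast : ((m + 1 : ℕ) - 1 : ℚ) * coeff (m + 1) g = m * (4 * coeff m f) := by
    rcases m with _ | m
    · simp
    · rw [hcoeff]
      push_cast; ring
  rw [hcoeff, hcoeff, hlast] at hrec
  simp only [Nat.add_sub_cancel, show m + 2 - 1 = m + 1 by omega]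
  push_cast at hrec ⊢
  linear_combination hrec / 4
end

section
/- If f ∈ ℚ⟦X⟧ is an algebraic formal power series, i.e. there exist an integer A ≥ 1 and polynomials p₀(X), …, p_A(X) ∈ ℚ[X], not all zero, with ∑_{i=0}^{A} pᵢ(X)·fⁱ = 0 in ℚ⟦X⟧, then f satisfies a nontrivial linear differential equation with polynomial coefficients: there exist an integer L ≥ 0 and polynomials q₀(X), …, q_L(X) ∈ ℚ[X], not all zero, such that ∑_{i=0}^{L} qᵢ(X)·f⁽ⁱ⁾ = 0 in ℚ⟦X⟧, where f⁽ⁱ⁾ denotes the i-th formal derivative of f. -/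
/-!
Let `g = P'(f)` for an annihilating polynomial `P ∈ ℚ[X][Y]` of `f` chosen so that `g ≠ 0`
(repeatedly replace `P` by `P'` while `P'(f) = 0`; this stops since `P` is not constant).
Differentiating `P(f) = 0` shows `g f' ∈ ℚ[X][f]`, hence `g b' ∈ ℚ[X][f]` for every `b ∈ ℚ[X][f]`,
and by induction `g^k f⁽ⁿ⁾ ∈ ℚ[X][f]` for some `k`. In the fraction field of `ℚ⟦X⟧` all
derivatives therefore lie in `ℚ(X)(f)`, which is finite-dimensional over `ℚ(X)`; so they are
linearly dependent over `ℚ(X)`, hence (clearing denominators) over `ℚ[X]`.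
-/

open Polynomial Finset

instance PowerSeries.instFaithfulSMulPolynomial {R : Type*} [CommSemiring R] :
    FaithfulSMul R[X] (PowerSeries R) :=
  (faithfulSMul_iff_algebraMap_injective _ _).mpr (Polynomial.coe_injective R)

theorem PowerSeries.derivative_algebraMap {R : Type*} [CommSemiring R] (p : R[X]) :
    derivative R (algebraMap R[X] (PowerSeries R) p) =
      algebraMap R[X] (PowerSeries R) (Polynomial.derivative p) :=
  derivative_coe p

namespace Derivation

variable {R A S : Type*} [CommRing R] [CommRing A] [CommRing S] [Algebra R S] [Algebra A S]
  (D : Derivation R S S) {x : S}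

theorem mul_apply_pow (a : S) (k : ℕ) : a * D (a ^ k) = k * a ^ k * D a := by
  rcases k with _ | k
  · simp
  · rw [leibniz_pow, nsmul_eq_mul, smul_eq_mul, pow_succ]
    push_cast
    ring

/-- The chain rule `D (P x) = P^D x + P' x * D x`, where `P^D` (`D` applied to the coefficients)
is only controlled through its membership in `A[x]`. -/
theorem apply_aeval_sub_mem_adjoin
    (hD : ∀ a : A, D (algebraMap A S a) ∈ Set.range (algebraMap A S)) (P : A[X]) :
    D (aeval x P) - aeval x (derivative P) * D x ∈ Algebra.adjoin A {x} := by
  induction P using Polynomial.induction_on' with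
  | add P Q hP hQ =>
    convert add_mem hP hQ using 1
    simp only [map_add]
    ring
  | monomial n a =>
    obtain ⟨b, hb⟩ := hD a
    have h : D (aeval x (monomial n a)) - aeval x (derivative (monomial n a)) * D x =
        algebraMap A S b * x ^ n := by
      rw [aeval_monomial, leibniz, leibniz_pow, derivative_monomial, aeval_monomial, hb]
      simp only [smul_eq_mul, nsmul_eq_mul, map_mul, _root_.map_natCast]
      ring
    rw [h]
    exact mul_mem (Subalgebra.algebraMap_mem _ b) (pow_mem (Algebra.self_mem_adjoin_singleton A x) n)

theorem aeval_derivative_mul_mem_adjoin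
    (hD : ∀ a : A, D (algebraMap A S a) ∈ Set.range (algebraMap A S))
    {P : A[X]} (hP : aeval x P = 0) {s : S} (hs : s ∈ Algebra.adjoin A {x}) :
    aeval x (derivative P) * D s ∈ Algebra.adjoin A {x} := by
  induction hs using Algebra.adjoin_induction with
  | mem y hy =>
    rw [Set.mem_singleton_iff.mp hy]
    simpa [hP] using neg_mem (D.apply_aeval_sub_mem_adjoin (x := x) hD P)
  | algebraMap a =>
    obtain ⟨b, hb⟩ := hD a
    rw [← hb]
    exact mul_mem (aeval_mem_adjoin_singleton A x) (Subalgebra.algebraMap_mem _ b)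
  | add s t _ _ hs ht =>
    rw [map_add, mul_add]
    exact add_mem hs ht
  | mul s t hs' ht' hs ht =>
    rw [leibniz, smul_eq_mul, smul_eq_mul, mul_add, mul_left_comm, mul_left_comm _ t]
    exact add_mem (mul_mem hs' ht) (mul_mem ht' hs)

theorem exists_pow_mul_iterate_mem_adjoin
    (hD : ∀ a : A, D (algebraMap A S a) ∈ Set.range (algebraMap A S))
    {P : A[X]} (hP : aeval x P = 0) (n : ℕ) :
    ∃ k, aeval x (derivative P) ^ k * D^[n] x ∈ Algebra.adjoin A {x} := by
  set g := aeval x (derivative P)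
  have hg : g ∈ Algebra.adjoin A {x} := aeval_mem_adjoin_singleton A x
  induction n with
  | zero => exact ⟨0, by simp⟩
  | succ n ih =>
    obtain ⟨k, hk⟩ := ih
    set h := D^[n] x
    have key : g ^ (k + 2) * D h = g * (g * D (g ^ k * h)) - k * (g * D g) * (g ^ k * h) := by
      rw [leibniz, smul_eq_mul, smul_eq_mul]
      linear_combination (-(g * h)) * D.mul_apply_pow g k
    refine ⟨k + 2, ?_⟩
    rw [Function.iterate_succ_apply', key]
    exact sub_mem (mul_mem hg (D.aeval_derivative_mul_mem_adjoin hD hP hk))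
      (mul_mem (mul_mem (natCast_mem _ _) (D.aeval_derivative_mul_mem_adjoin hD hP hg)) hk)

end Derivation

theorem isAlgebraic_of_sum_range_mul_pow_eq_zero {R S : Type*} [CommRing R] [CommRing S]
    [Algebra R S] {x : S} {n : ℕ} (p : ℕ → R) (hp : ∃ i ≤ n, p i ≠ 0)
    (h : ∑ i ∈ range (n + 1), algebraMap R S (p i) * x ^ i = 0) : IsAlgebraic R x := by
  obtain ⟨i, hi, hpi⟩ := hp
  refine ⟨∑ i ∈ range (n + 1), C (p i) * X ^ i, fun h0 ↦ hpi ?_, ?_⟩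
  · simpa [finsetSum_coeff, coeff_C_mul_X_pow, Nat.lt_succ_of_le hi] using congr_arg (coeff · i) h0
  · simpa only [map_sum, map_mul, aeval_C, map_pow, aeval_X] using h

theorem IsAlgebraic.exists_aeval_derivative_ne_zero {R S : Type*} [CommRing R]
    [IsAddTorsionFree R] [CommRing S] [Algebra R S] [FaithfulSMul R S] {x : S}
    (hx : IsAlgebraic R x) : ∃ P : R[X], aeval x P = 0 ∧ aeval x (derivative P) ≠ 0 := by
  obtain ⟨P, hP0, hP⟩ := hx
  induction h : P.natDegree using Nat.strong_induction_on generalizing P with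
  | _ n ih =>
    by_cases hD : aeval x (derivative P) = 0
    · have hn : P.natDegree ≠ 0 := by
        rintro hn
        obtain ⟨a, rfl⟩ := natDegree_eq_zero.mp hn
        rw [aeval_C, map_eq_zero_iff _ (FaithfulSMul.algebraMap_injective R S)] at hP
        exact hP0 (by rw [hP, C_0])
      exact ih _ (h ▸ natDegree_derivative_lt hn) _ (mt derivative_eq_zero.mp hn) hD rfl
    · exact ⟨P, hP, hD⟩

open IntermediateField in
/-- Passing to fraction fields, the `v i` lie in `K⟮x⟯`, which is finite-dimensional over
`K = Frac R`. -/
theorem not_linearIndependent_of_pow_mul_mem_adjoin {R S ι : Type*} [CommRing R] [IsDomain R]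
    [CommRing S] [IsDomain S] [Algebra R S] [FaithfulSMul R S] [Infinite ι] {x : S}
    (hx : IsAlgebraic R x) {g : S} (hg : g ∈ Algebra.adjoin R {x}) (hg0 : g ≠ 0) {v : ι → S}
    (hv : ∀ i, ∃ k, g ^ k * v i ∈ Algebra.adjoin R {x}) : ¬LinearIndependent R v := by
  let K := FractionRing R
  let L := FractionRing S
  let _ := FractionRing.liftAlgebra R L
  let φ : S →ₐ[R] L := IsScalarTower.toAlgHom R S L
  have hφ : Function.Injective φ := IsFractionRing.injective S L
  have hint : IsIntegral K (φ x) :=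
    ((hx.algHom φ).extendScalars (IsFractionRing.injective R K)).isIntegral
  have := adjoin.finiteDimensional hint
  have hadj : ∀ s ∈ Algebra.adjoin R {x}, φ s ∈ K⟮φ x⟯ := fun _ hs ↦
    (Algebra.adjoin_le (S := (K⟮φ x⟯.toSubalgebra.restrictScalars R).comap φ)
      (by simpa using mem_adjoin_simple_self K (φ x))) hs
  have hv' : ∀ i, φ (v i) ∈ K⟮φ x⟯ := fun i ↦ by
    obtain ⟨k, hk⟩ := hv i
    have hgk : φ g ^ k ≠ 0 := pow_ne_zero k ((map_ne_zero_iff φ hφ).mpr hg0)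
    have h := mul_mem (inv_mem (pow_mem (hadj g hg) k)) (hadj _ hk)
    rwa [map_mul, map_pow, inv_mul_cancel_left₀ hgk] at h
  intro hli
  have hK : LinearIndependent K (φ ∘ v) :=
    (LinearIndependent.iff_fractionRing R K).mp
      (hli.map' φ.toLinearMap (LinearMap.ker_eq_bot.mpr hφ))
  exact Module.Finite.not_linearIndependent_of_infinite (R := K) (fun i ↦ (⟨_, hv' i⟩ : K⟮φ x⟯))
    (hK.of_comp K⟮φ x⟯.val.toLinearMap)

theorem exists_sum_range_smul_eq_zero_of_not_linearIndependent {R M : Type*} [Ring R]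
    [AddCommGroup M] [Module R M] {v : ℕ → M} (h : ¬LinearIndependent R v) :
    ∃ (L : ℕ) (q : ℕ → R), (∃ i ≤ L, q i ≠ 0) ∧ ∑ i ∈ range (L + 1), q i • v i = 0 := by
  obtain ⟨s, g, hsum, i, hi, hgi⟩ := not_linearIndependent_iff.mp h
  have hs : s ⊆ range (s.sup id + 1) := fun j hj ↦
    mem_range.mpr (Nat.lt_succ_of_le (le_sup (f := id) hj))
  refine ⟨s.sup id, fun j ↦ if j ∈ s then g j else 0, ⟨i, le_sup (f := id) hi, by simpa [hi]⟩, ?_⟩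
  rw [← hsum]
  simp only [ite_smul, zero_smul]
  rw [sum_ite_mem, inter_eq_right.mpr hs]

theorem algebraic_powerSeries_isDFinite_general (f : PowerSeries ℚ) (A : ℕ)
    (p : ℕ → Polynomial ℚ) (hp : ∃ i ≤ A, p i ≠ 0)
    (heq : ∑ i ∈ Finset.range (A + 1), (p i : PowerSeries ℚ) * f ^ i = 0) :
    ∃ (L : ℕ) (q : ℕ → Polynomial ℚ), (∃ i ≤ L, q i ≠ 0) ∧
      ∑ i ∈ Finset.range (L + 1),
        (q i : PowerSeries ℚ) * (PowerSeries.derivativeFun^[i] f) = 0 := by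
  have hf : IsAlgebraic ℚ[X] f := isAlgebraic_of_sum_range_mul_pow_eq_zero p hp heq
  obtain ⟨P, hP, hg0⟩ := hf.exists_aeval_derivative_ne_zero
  have hD (a : ℚ[X]) : PowerSeries.derivative ℚ (algebraMap ℚ[X] (PowerSeries ℚ) a) ∈
      Set.range (algebraMap ℚ[X] (PowerSeries ℚ)) :=
    ⟨_, (PowerSeries.derivative_algebraMap a).symm⟩
  have hli : ¬LinearIndependent ℚ[X] fun n ↦ (PowerSeries.derivative ℚ)^[n] f :=
    not_linearIndependent_of_pow_mul_mem_adjoin hf (aeval_mem_adjoin_singleton _ f) hg0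
      ((PowerSeries.derivative ℚ).exists_pow_mul_iterate_mem_adjoin hD hP)
  obtain ⟨L, q, hq, hsum⟩ := exists_sum_range_smul_eq_zero_of_not_linearIndependent hli
  simp only [Algebra.smul_def] at hsum
  exact ⟨L, q, hq, hsum⟩

/-- Every algebraic formal power series over ℚ is D-finite: if f satisfies a
nontrivial polynomial equation ∑_{i=0}^{A} pᵢ(X)·fⁱ = 0 with A ≥ 1, then there
are polynomials q₀, …, q_L, not all zero, with ∑_{i=0}^{L} qᵢ(X)·f⁽ⁱ⁾ = 0,
where f⁽ⁱ⁾ is the i-th formal derivative of f. -/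
theorem algebraic_powerSeries_isDFinite (f : PowerSeries ℚ) (A : ℕ)
    (p : ℕ → Polynomial ℚ) (hA : 1 ≤ A) (hp : ∃ i ≤ A, p i ≠ 0)
    (heq : ∑ i ∈ Finset.range (A + 1), (p i : PowerSeries ℚ) * f ^ i = 0) :
    ∃ (L : ℕ) (q : ℕ → Polynomial ℚ), (∃ i ≤ L, q i ≠ 0) ∧
      ∑ i ∈ Finset.range (L + 1),
        (q i : PowerSeries ℚ) * (PowerSeries.derivativeFun^[i] f) = 0 :=
  algebraic_powerSeries_isDFinite_general f A p hp heq
end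

section
/- Let f = ∑_{n≥0} a(n)·Xⁿ ∈ ℚ⟦X⟧ satisfy a nontrivial linear differential equation with polynomial coefficients: ∑_{i=0}^{L} qᵢ(X)·f⁽ⁱ⁾ = 0 with q₀, …, q_L ∈ ℚ[X] not all zero, where f⁽ⁱ⁾ is the i-th formal derivative. Then the coefficient sequence a is P-recursive: there exist an integer M ≥ 0, polynomials c₀(n), …, c_M(n) ∈ ℚ[n], not all zero, and an integer n₀ ≥ M, such that ∑_{i=0}^{M} cᵢ(n)·a(n−i) = 0 for every integer n ≥ n₀. -/
/-!
Multiplying the equation by `X ^ L` rewrites it as `∑ pᵢ · Xⁱ f⁽ⁱ⁾ = 0` with `pᵢ = X ^ (L - i) · qᵢ`.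
The `n`-th coefficient of `Xⁱ f⁽ⁱ⁾` is `n (n - 1) ⋯ (n - i + 1) · a(n)`, so the `n`-th coefficient
of that equation is `∑ₖ cₖ(n) · a(n - k)` with `cₖ = ∑ᵢ [Xᵏ]pᵢ · (X - k)(X - k - 1) ⋯ (X - k - i + 1)`.
These shifted falling factorials have pairwise distinct degrees, hence are linearly independent,
so `cₖ ≠ 0` as soon as some `[Xᵏ]pᵢ ≠ 0`.
-/

open Finset Polynomial

namespace PowerSeries

variable {R : Type*} [CommSemiring R]

theorem coeff_X_pow_mul_iterate_derivative (f : R⟦X⟧) (i n : ℕ) :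
    coeff n (X ^ i * (d⁄dX R)^[i] f) = n.descFactorial i * coeff n f := by
  rw [coeff_X_pow_mul']
  split_ifs with hin
  · obtain ⟨m, rfl⟩ := Nat.exists_eq_add_of_le' hin
    rw [Nat.add_sub_cancel, coeff_iterate_derivative, Nat.add_descFactorial_eq_ascFactorial]
  · rw [Nat.descFactorial_of_lt (not_le.mp hin), Nat.cast_zero, zero_mul]

theorem coeff_coe_mul_of_natDegree_le (p : R[X]) (g : R⟦X⟧) {N n : ℕ} (hp : p.natDegree ≤ N)
    (hN : N ≤ n) : coeff n ((p : R⟦X⟧) * g) = ∑ k ∈ range (N + 1), p.coeff k * coeff (n - k) g := by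
  rw [coeff_mul, Nat.sum_antidiagonal_eq_sum_range_succ (fun k l => coeff k (p : R⟦X⟧) * coeff l g)]
  simp only [Polynomial.coeff_coe]
  refine (sum_subset (range_subset_range.mpr (by omega)) fun k _ hk => ?_).symm
  rw [coeff_eq_zero_of_natDegree_lt (by rw [mem_range] at hk; omega), zero_mul]

theorem coeff_sum_coe_mul_X_pow_mul_iterate_derivative (f : R⟦X⟧) (p : ℕ → R[X]) (s : Finset ℕ)
    {M n : ℕ} (hp : ∀ i ∈ s, (p i).natDegree ≤ M) (hn : M ≤ n) :
    coeff n (∑ i ∈ s, (p i : R⟦X⟧) * (X ^ i * (d⁄dX R)^[i] f)) =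
      ∑ k ∈ range (M + 1),
        (∑ i ∈ s, (p i).coeff k * (n - k).descFactorial i) * coeff (n - k) f := by
  rw [map_sum, sum_congr rfl fun i hi => coeff_coe_mul_of_natDegree_le _ _ (hp i hi) hn, sum_comm]
  simp only [coeff_X_pow_mul_iterate_derivative, sum_mul, mul_assoc]

end PowerSeries

section RecurrenceCoeff

variable {R : Type*} [CommRing R]

noncomputable def recurrenceCoeff (p : ℕ → R[X]) (s : Finset ℕ) (k : ℕ) : R[X] :=
  ∑ i ∈ s, (p i).coeff k • (descPochhammer R i).comp (X - C (k : R))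

theorem eval_recurrenceCoeff (p : ℕ → R[X]) (s : Finset ℕ) {k n : ℕ} (hk : k ≤ n) :
    (recurrenceCoeff p s k).eval (n : R) = ∑ i ∈ s, (p i).coeff k * (n - k).descFactorial i := by
  simp only [recurrenceCoeff, eval_finsetSum, eval_smul, eval_comp, eval_sub, eval_X, eval_C,
    smul_eq_mul, ← Nat.cast_sub hk, descPochhammer_eval_eq_descFactorial]

variable [IsDomain R]

noncomputable def shiftedDescPochhammer (r : R) : Polynomial.Sequence R where
  elems' i := (descPochhammer R i).comp (X - C r)
  degree_eq' i := by
    rw [degree_eq_natDegree ((monic_descPochhammer R i).comp_X_sub_C r).ne_zero, natDegree_comp]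
    simp

theorem recurrenceCoeff_ne_zero {p : ℕ → R[X]} {s : Finset ℕ} {i : ℕ} (hi : i ∈ s) {k : ℕ}
    (hk : (p i).coeff k ≠ 0) : recurrenceCoeff p s k ≠ 0 :=
  fun h => hk <| linearIndependent_iff'.mp (shiftedDescPochhammer (k : R)).linearIndependent
    s (fun i => (p i).coeff k) h i hi

end RecurrenceCoeff

/-- If a formal power series f over ℚ satisfies a nontrivial linear
differential equation ∑_{i=0}^{L} qᵢ(X)·f⁽ⁱ⁾ = 0 with polynomial coefficients,
then its coefficient sequence a(n) is P-recursive: there exist M ≥ 0,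
polynomials c₀, …, c_M not all zero, and n₀ ≥ M such that
∑_{i=0}^{M} cᵢ(n)·a(n−i) = 0 for every n ≥ n₀. -/
theorem dFinite_coeffs_pRecursive (f : PowerSeries ℚ) (L : ℕ)
    (q : ℕ → Polynomial ℚ) (hq : ∃ i ≤ L, q i ≠ 0)
    (heq : ∑ i ∈ Finset.range (L + 1),
        (q i : PowerSeries ℚ) * (PowerSeries.derivativeFun^[i] f) = 0) :
    ∃ (M : ℕ) (c : ℕ → Polynomial ℚ) (n₀ : ℕ), M ≤ n₀ ∧ (∃ i ≤ M, c i ≠ 0) ∧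
      ∀ n : ℕ, n₀ ≤ n →
        ∑ i ∈ Finset.range (M + 1),
          (c i).eval (n : ℚ) * PowerSeries.coeff (n - i) f = 0 := by
  obtain ⟨i₀, hi₀, hqi₀⟩ := hq
  set p : ℕ → ℚ[X] := fun i => X ^ (L - i) * q i
  set M := L + (range (L + 1)).sup fun i => (q i).natDegree
  have hpM : ∀ i ∈ range (L + 1), (p i).natDegree ≤ M := fun i hi => by
    have := le_sup (f := fun i => (q i).natDegree) hi
    exact natDegree_mul_le.trans (by rw [natDegree_X_pow]; omega)
  -- `PowerSeries.derivativeFun` is definitionally the coercion of `PowerSeries.derivative ℚ`.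
  have hp : ∑ i ∈ range (L + 1),
      (p i : PowerSeries ℚ) * (PowerSeries.X ^ i * (PowerSeries.derivative ℚ)^[i] f) = 0 := by
    rw [← mul_zero (PowerSeries.X ^ L), ← heq, mul_sum]
    refine sum_congr rfl fun i hi => ?_
    rw [← pow_sub_mul_pow PowerSeries.X (Nat.le_of_lt_succ (mem_range.mp hi))]
    simp only [p, Polynomial.coe_mul, Polynomial.coe_pow, Polynomial.coe_X]
    exact (mul_mul_mul_comm ..).symm
  refine ⟨M, recurrenceCoeff p (range (L + 1)), M, le_rfl, ?_, fun n hn => ?_⟩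
  · have hpi₀ : p i₀ ≠ 0 := mul_ne_zero (pow_ne_zero _ X_ne_zero) hqi₀
    exact ⟨_, hpM i₀ (mem_range.mpr (by omega)),
      recurrenceCoeff_ne_zero (mem_range.mpr (by omega)) (leadingCoeff_ne_zero.mpr hpi₀)⟩
  · rw [← map_zero (PowerSeries.coeff n), ← hp,
      PowerSeries.coeff_sum_coe_mul_X_pow_mul_iterate_derivative f p _ hpM hn]
    refine sum_congr rfl fun k hk => ?_
    rw [eval_recurrenceCoeff p _ ((Nat.le_of_lt_succ (mem_range.mp hk)).trans hn)]
end
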